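/- For every n ≥ 1 and m ≥ 1: P(ξ̃_{α_n} = 1) = P(ξ̃_{α_n} = −1) = P(ξ̃_{β_m} = 1) = P(ξ̃_{β_m} = −1) = 1/2. -/

import Mathlib

/-!
On `{α_n = i + 1}` the walks move together at step `i + 1`, so this event is
`A ∩ {ξ_{i+1} = η_{i+1}}` with `A = {T_i = n - 1} ∈ F_i`. As `ξ_{i+1}` and `η_{i+1}` are both fair
given `F_i`, the masses `a, b, c, d` of the cells `A ∩ {ξ_{i+1} = ±1} ∩ {η_{i+1} = ±1}` satisfy
`a + b = c + d = a + c = b + d`, whence `a = d`: given `α_n = i + 1`, the value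
`ξ̃_{α_n} = ξ_{i+1}` is a fair sign. On `{α_n = ∞} ∈ F_∞` it is `ζ_n`, which is fair and
independent of `F_∞`. Summing over the values of `α_n` gives `P(ξ̃_{α_n} = ±1) = 1/2`. For `β_m`
the event is `A ∩ {ξ_{i+1} ≠ η_{i+1}}` and one uses `b = c` instead.
-/

open MeasureTheory ProbabilityTheory Filter Set

noncomputable section

variable {Ω : Type*}

/-- `Q n = 1` if the `n`-th moves agree, `0` if they are opposite. -/
def Qproc (ξ η : ℕ → Ω → ℝ) (n : ℕ) (ω : Ω) : ℕ :=
  if ξ n ω = η n ω then 1 else 0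

/-- `T n = ∑_{k=1}^n Q k`, the number of common movements up to step `n`. -/
def Tproc (ξ η : ℕ → Ω → ℝ) (n : ℕ) (ω : Ω) : ℕ :=
  ∑ k ∈ Finset.Icc 1 n, Qproc ξ η k ω

/-- `S n = n - T n`, the number of counter movements up to step `n`. -/
def Sproc (ξ η : ℕ → Ω → ℝ) (n : ℕ) (ω : Ω) : ℕ :=
  n - Tproc ξ η n ω

/-- `α n = inf {k ≥ 1 : T k = n}`, with `inf ∅ = ⊤`, valued in `ℕ∞`. -/
def alphaProc (ξ η : ℕ → Ω → ℝ) (n : ℕ) (ω : Ω) : ℕ∞ :=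
  ⨅ (k : ℕ) (_ : 1 ≤ k ∧ Tproc ξ η k ω = n), (k : ℕ∞)

/-- `β n = inf {k ≥ 1 : S k = n}`, with `inf ∅ = ⊤`, valued in `ℕ∞`. -/
def betaProc (ξ η : ℕ → Ω → ℝ) (n : ℕ) (ω : Ω) : ℕ∞ :=
  ⨅ (k : ℕ) (_ : 1 ≤ k ∧ Sproc ξ η k ω = n), (k : ℕ∞)

/-- `ξ̃_{α n}`: equal to `ξ_i` on `{α n = i}` (`i < ∞`) and to `ζ n` on `{α n = ∞}`. -/
def xiAlpha (ξ η ζ : ℕ → Ω → ℝ) (n : ℕ) (ω : Ω) : ℝ :=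
  if alphaProc ξ η n ω = ⊤ then ζ n ω else ξ (alphaProc ξ η n ω).toNat ω

/-- `ξ̃_{β m}`: equal to `ξ_i` on `{β m = i}` (`i < ∞`) and to `ψ m` on `{β m = ∞}`. -/
def xiBeta (ξ η ψ : ℕ → Ω → ℝ) (m : ℕ) (ω : Ω) : ℝ :=
  if betaProc ξ η m ω = ⊤ then ψ m ω else ξ (betaProc ξ η m ω).toNat ω

/-- The common-movement walk `X n = ∑_{i=1}^n ξ̃_{α i}`. -/
def Xproc (ξ η ζ : ℕ → Ω → ℝ) (n : ℕ) (ω : Ω) : ℝ :=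
  ∑ i ∈ Finset.Icc 1 n, xiAlpha ξ η ζ i ω

/-- The counter-movement walk `Y n = ∑_{i=1}^n ξ̃_{β i}`. -/
def Yproc (ξ η ψ : ℕ → Ω → ℝ) (n : ℕ) (ω : Ω) : ℝ :=
  ∑ i ∈ Finset.Icc 1 n, xiBeta ξ η ψ i ω

open scoped ENNReal

def firstHitting (N : ℕ → ℕ) (n : ℕ) : ℕ∞ :=
  ⨅ (k : ℕ) (_ : 1 ≤ k ∧ N k = n), (k : ℕ∞)

section FirstHitting

variable {N : ℕ → ℕ} {n : ℕ}

lemma firstHitting_le_coe_iff (i : ℕ) : firstHitting N n ≤ i ↔ ∃ j ∈ Icc 1 i, N j = n := by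
  refine ⟨fun h => ?_,
    fun ⟨j, hj, hNj⟩ => (iInf₂_le j ⟨hj.1, hNj⟩).trans (by exact_mod_cast hj.2)⟩
  by_contra! hnone
  have : ((i + 1 : ℕ) : ℕ∞) ≤ firstHitting N n :=
    le_iInf₂ fun k hk => by
      have : ¬ k ≤ i := fun hki => hnone k ⟨hk.1, hki⟩ hk.2
      exact_mod_cast not_le.1 this
  exact absurd (this.trans h) (by norm_cast; omega)

lemma firstHitting_ne_zero : firstHitting N n ≠ 0 := fun h => by
  simpa using (firstHitting_le_coe_iff (N := N) (n := n) 0).1 h.le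

lemma exists_mem_Icc_eq_iff_le (h0 : N 0 = 0)
    (hstep : ∀ i, N i ≤ N (i + 1) ∧ N (i + 1) ≤ N i + 1) (hn : 1 ≤ n) (i : ℕ) :
    (∃ j ∈ Icc 1 i, N j = n) ↔ n ≤ N i := by
  refine ⟨fun ⟨j, hj, hNj⟩ => hNj ▸ monotone_nat_of_le_succ (fun k => (hstep k).1) hj.2,
    fun h => ?_⟩
  induction i with
  | zero => omega
  | succ i ih =>
    by_cases hi : n ≤ N i
    · obtain ⟨j, hj, hNj⟩ := ih hi
      exact ⟨j, ⟨hj.1, hj.2.trans i.le_succ⟩, hNj⟩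
    · exact ⟨i + 1, ⟨by omega, le_rfl⟩, by have := hstep i; omega⟩

lemma firstHitting_eq_add_one_iff (h0 : N 0 = 0)
    (hstep : ∀ i, N i ≤ N (i + 1) ∧ N (i + 1) ≤ N i + 1) (hn : 1 ≤ n) (i : ℕ) :
    firstHitting N n = (i + 1 : ℕ) ↔ N i + 1 = n ∧ N (i + 1) = N i + 1 := by
  have hle (k : ℕ) : firstHitting N n ≤ k ↔ n ≤ N k :=
    (firstHitting_le_coe_iff k).trans (exists_mem_Icc_eq_iff_le h0 hstep hn k)
  have : firstHitting N n = (i + 1 : ℕ) ↔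
      firstHitting N n ≤ (i + 1 : ℕ) ∧ ¬ firstHitting N n ≤ i := by
    induction firstHitting N n using ENat.recTopCoe with
    | top =>
      exact iff_of_false (ENat.top_ne_natCast _)
        fun h => ENat.natCast_ne_top _ (top_le_iff.1 h.1)
    | coe k => norm_cast; omega
  rw [this, hle, hle]
  have := hstep i
  omega

end FirstHitting

section Walks

variable (ξ η : ℕ → Ω → ℝ)

lemma Qproc_le_one (ω : Ω) (k : ℕ) : Qproc ξ η k ω ≤ 1 := by
  unfold Qproc; split <;> omega

lemma Tproc_succ (ω : Ω) (i : ℕ) : Tproc ξ η (i + 1) ω = Tproc ξ η i ω + Qproc ξ η (i + 1) ω :=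
  Finset.sum_Icc_succ_top (Nat.le_add_left 1 i) _

lemma Tproc_le_self (ω : Ω) (i : ℕ) : Tproc ξ η i ω ≤ i := by
  induction i with
  | zero => simp [Tproc]
  | succ i ih => have := Qproc_le_one ξ η ω (i + 1); rw [Tproc_succ]; omega

lemma Sproc_succ (ω : Ω) (i : ℕ) :
    Sproc ξ η (i + 1) ω = Sproc ξ η i ω + (1 - Qproc ξ η (i + 1) ω) := by
  have := Tproc_le_self ξ η ω i
  have := Qproc_le_one ξ η ω (i + 1)
  simp only [Sproc, Tproc_succ]
  omega

lemma alphaProc_ne_zero (ω : Ω) (n : ℕ) : alphaProc ξ η n ω ≠ 0 := firstHitting_ne_zero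

lemma betaProc_ne_zero (ω : Ω) (n : ℕ) : betaProc ξ η n ω ≠ 0 := firstHitting_ne_zero

lemma setOf_alphaProc_eq_add_one {n : ℕ} (hn : 1 ≤ n) (i : ℕ) :
    {ω | alphaProc ξ η n ω = (i + 1 : ℕ)} =
      {ω | Tproc ξ η i ω + 1 = n} ∩ {ω | ξ (i + 1) ω = η (i + 1) ω} := by
  ext ω
  have hstep (k : ℕ) := Tproc_succ ξ η ω k
  have hQ (k : ℕ) := Qproc_le_one ξ η ω k
  rw [mem_ofPred_eq, alphaProc, ← firstHitting, firstHitting_eq_add_one_iff (by simp [Tproc])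
    (fun k => by have := hstep k; have := hQ (k + 1); omega) hn, hstep]
  simp [Qproc]

lemma setOf_betaProc_eq_add_one {n : ℕ} (hn : 1 ≤ n) (i : ℕ) :
    {ω | betaProc ξ η n ω = (i + 1 : ℕ)} =
      {ω | Sproc ξ η i ω + 1 = n} ∩ {ω | ξ (i + 1) ω ≠ η (i + 1) ω} := by
  ext ω
  have hstep (k : ℕ) := Sproc_succ ξ η ω k
  have hQ (k : ℕ) := Qproc_le_one ξ η ω k
  rw [mem_ofPred_eq, betaProc, ← firstHitting, firstHitting_eq_add_one_iff (by simp [Sproc])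
    (fun k => by have := hstep k; have := hQ (k + 1); omega) hn, hstep]
  unfold Qproc
  split_ifs <;> simp [*]

end Walks

section FairSigns

variable {m mΩ : MeasurableSpace Ω} {P : Measure Ω}

def IsFairSignGiven (P : Measure Ω) (m : MeasurableSpace Ω) (X : Ω → ℝ) : Prop :=
  (P[{ω | X ω = 1}.indicator (fun _ => (1 : ℝ)) | m] =ᵐ[P] fun _ => 1 / 2) ∧
    (P[{ω | X ω = -1}.indicator (fun _ => (1 : ℝ)) | m] =ᵐ[P] fun _ => 1 / 2)

lemma measure_inter_eq_half_of_condExp [IsFiniteMeasure P] (hm : m ≤ mΩ)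
    {A S : Set Ω} (hA : MeasurableSet[m] A) (hS : MeasurableSet S)
    (h : P[S.indicator (fun _ => (1 : ℝ)) | m] =ᵐ[P] fun _ => 1 / 2) :
    P (A ∩ S) = P A * 2⁻¹ := by
  have key := setIntegral_condExp hm ((integrable_const (μ := P) (1 : ℝ)).indicator hS) hA
  rw [setIntegral_congr_ae (hm A hA) (h.mono fun _ hx _ => hx), setIntegral_const,
    integral_indicator_const _ hS, measureReal_restrict_apply hS, inter_comm] at key
  have : (P (A ∩ S)).toReal = (P A * 2⁻¹).toReal := by
    simpa [measureReal_def, ENNReal.toReal_mul, mul_comm] using key.symm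
  exact (ENNReal.toReal_eq_toReal_iff' (measure_ne_top _ _) (by finiteness)).1 this

lemma measure_inter_add_inter_of_sign (P : Measure Ω) {Y : Ω → ℝ} (hY : Measurable Y)
    (hv : ∀ ω, Y ω = 1 ∨ Y ω = -1) (s : Set Ω) :
    P (s ∩ {ω | Y ω = 1}) + P (s ∩ {ω | Y ω = -1}) = P s := by
  rw [← measure_inter_add_sdiff s (hY (measurableSet_singleton 1))]
  congr 2
  ext ω
  have := hv ω
  simp only [Set.mem_sdiff, mem_inter_iff, mem_ofPred_eq]
  grind

lemma measure_inter_eq_half_of_eq (P : Measure Ω) {Y : Ω → ℝ} (hY : Measurable Y)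
    (hv : ∀ ω, Y ω = 1 ∨ Y ω = -1) {s : Set Ω}
    (h : P (s ∩ {ω | Y ω = 1}) = P (s ∩ {ω | Y ω = -1})) :
    P (s ∩ {ω | Y ω = 1}) = P s * 2⁻¹ ∧ P (s ∩ {ω | Y ω = -1}) = P s * 2⁻¹ := by
  have hs := measure_inter_add_inter_of_sign P hY hv s
  have half : P (s ∩ {ω | Y ω = 1}) = P s * 2⁻¹ := by
    rw [← hs, ← h, add_mul, ← div_eq_mul_inv, ENNReal.add_halves]
  exact ⟨half, h ▸ half⟩

lemma measure_inter_sign_eq_of_isFairSignGiven [IsFiniteMeasure P] (hm : m ≤ mΩ) {X Y : Ω → ℝ}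
    (hXm : Measurable X) (hYm : Measurable Y)
    (hXv : ∀ ω, X ω = 1 ∨ X ω = -1) (hYv : ∀ ω, Y ω = 1 ∨ Y ω = -1)
    (hX : IsFairSignGiven P m X) (hY : IsFairSignGiven P m Y)
    {A : Set Ω} (hA : MeasurableSet[m] A) :
    P (A ∩ {ω | X ω = Y ω} ∩ {ω | X ω = 1}) = P (A ∩ {ω | X ω = Y ω} ∩ {ω | X ω = -1}) ∧
      P (A ∩ {ω | X ω ≠ Y ω} ∩ {ω | X ω = 1}) = P (A ∩ {ω | X ω ≠ Y ω} ∩ {ω | X ω = -1}) := by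
  have hXY (u : ℝ) :
      A ∩ {ω | X ω = Y ω} ∩ {ω | X ω = u} = A ∩ {ω | X ω = u} ∩ {ω | Y ω = u} := by
    ext ω
    simp only [mem_inter_iff, mem_ofPred_eq]
    grind
  have hXnY (u : ℝ) (hu : u = 1 ∨ u = -1) :
      A ∩ {ω | X ω ≠ Y ω} ∩ {ω | X ω = u} = A ∩ {ω | X ω = u} ∩ {ω | Y ω = -u} := by
    ext ω
    have := hYv ω
    simp only [mem_inter_iff, mem_ofPred_eq]
    grind
  have hhalf {Z : Ω → ℝ} (hZ : Measurable Z) (u : ℝ)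
      (h : P[{ω | Z ω = u}.indicator (fun _ => (1 : ℝ)) | m] =ᵐ[P] fun _ => 1 / 2) :
      P (A ∩ {ω | Z ω = u}) = P A * 2⁻¹ :=
    measure_inter_eq_half_of_condExp hm hA (hZ (measurableSet_singleton u)) h
  have hX₁ := measure_inter_add_inter_of_sign P hYm hYv (A ∩ {ω | X ω = 1})
  have hY₁ := measure_inter_add_inter_of_sign P hXm hXv (A ∩ {ω | Y ω = 1})
  have hY₂ := measure_inter_add_inter_of_sign P hXm hXv (A ∩ {ω | Y ω = -1})
  rw [hhalf hXm _ hX.1] at hX₁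
  rw [hhalf hYm _ hY.1, inter_right_comm, inter_right_comm A {ω | Y ω = 1}] at hY₁
  rw [hhalf hYm _ hY.2, inter_right_comm, inter_right_comm A {ω | Y ω = -1}] at hY₂
  rw [hXY, hXY, hXnY 1 (.inl rfl), hXnY (-1) (.inr rfl), neg_neg]
  -- the cell masses `a, b, c, d` satisfy `a + b = a + c = b + d`, so `b = c` and `a = d`
  exact ⟨(ENNReal.add_left_inj (measure_ne_top P _)).1
      (hX₁.trans (hY₂.symm.trans (add_comm _ _))),
    (ENNReal.add_right_inj (measure_ne_top P _)).1 (hX₁.trans hY₁.symm)⟩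

end FairSigns

section StoppedValue

variable {β : Type*}

def stoppedValueOr (ξ : ℕ → Ω → β) (τ : Ω → ℕ∞) (W : Ω → β) (ω : Ω) : β :=
  if τ ω = ⊤ then W ω else ξ (τ ω).toNat ω

lemma measurableSet_eq_top_of_forall_eq_coe {m : MeasurableSpace Ω} {τ : Ω → ℕ∞}
    (hτ : ∀ i : ℕ, MeasurableSet[m] {ω | τ ω = i}) : MeasurableSet[m] {ω | τ ω = ⊤} := by
  have : {ω | τ ω = ⊤} = ⋂ i : ℕ, {ω | τ ω = i}ᶜ := by
    ext ω
    simp [ENat.eq_top_iff_forall_ne, eq_comm]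
  exact this ▸ .iInter fun i => (hτ i).compl

variable [MeasurableSpace Ω] {P : Measure Ω}

lemma measure_eq_tsum_inter_fiber {τ : Ω → ℕ∞} (hτ : ∀ j, MeasurableSet {ω | τ ω = j})
    (S : Set Ω) : P S = ∑' j, P ({ω | τ ω = j} ∩ S) := by
  have := tsum_measure_preimage_singleton (μ := P.restrict S) (s := univ) countable_univ
    (fun j _ => hτ j)
  rw [preimage_univ, Measure.restrict_apply_univ] at this
  rw [← this, tsum_univ (fun j => P.restrict S (τ ⁻¹' {j}))]
  exact tsum_congr fun j => Measure.restrict_apply (hτ j)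

theorem measure_stoppedValueOr_eq [IsProbabilityMeasure P] {F : Filtration ℕ ‹MeasurableSpace Ω›}
    {τ : Ω → ℕ∞} (hτ : ∀ i : ℕ, MeasurableSet[F i] {ω | τ ω = i})
    [MeasurableSpace β] [MeasurableSingletonClass β] {ξ : ℕ → Ω → β} {W : Ω → β}
    (hind : Indep (⨆ i, F i) (MeasurableSpace.comap W inferInstance) P) {c : β} {r : ℝ≥0∞}
    (hW : P {ω | W ω = c} = r)
    (hξ : ∀ i : ℕ, P ({ω | τ ω = i} ∩ {ω | ξ i ω = c}) = P {ω | τ ω = i} * r) :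
    P {ω | stoppedValueOr ξ τ W ω = c} = r := by
  have hτ_top : MeasurableSet[⨆ i, F i] {ω | τ ω = ⊤} :=
    measurableSet_eq_top_of_forall_eq_coe fun i =>
      le_iSup (fun i => (F i : MeasurableSpace Ω)) i _ (hτ i)
  have hτ_meas (j : ℕ∞) : MeasurableSet {ω | τ ω = j} := by
    induction j using ENat.recTopCoe with
    | top => exact iSup_le F.le _ hτ_top
    | coe i => exact F.le i _ (hτ i)
  have hfiber (j : ℕ∞) :
      P ({ω | τ ω = j} ∩ {ω | stoppedValueOr ξ τ W ω = c}) = P {ω | τ ω = j} * r := by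
    induction j using ENat.recTopCoe with
    | top =>
      have : {ω | τ ω = ⊤} ∩ {ω | stoppedValueOr ξ τ W ω = c} =
          {ω | τ ω = ⊤} ∩ {ω | W ω = c} := by
        ext ω; simp +contextual [stoppedValueOr]
      rw [this, (Indep_iff _ _ _).1 hind _ {ω | W ω = c} hτ_top
        ⟨{c}, measurableSet_singleton c, rfl⟩, hW]
    | coe i =>
      have : {ω | τ ω = i} ∩ {ω | stoppedValueOr ξ τ W ω = c} =
          {ω | τ ω = i} ∩ {ω | ξ i ω = c} := by
        ext ω; simp +contextual [stoppedValueOr]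
      rw [this, hξ]
  have htotal : ∑' j, P {ω | τ ω = j} = 1 := by
    simpa using (measure_eq_tsum_inter_fiber (P := P) hτ_meas univ).symm
  calc P {ω | stoppedValueOr ξ τ W ω = c}
      = ∑' j, P {ω | τ ω = j} * r := by
        rw [measure_eq_tsum_inter_fiber hτ_meas]; exact tsum_congr hfiber
    _ = r := by rw [ENNReal.tsum_mul_right, htotal, one_mul]

end StoppedValue

section SignWalks

variable {mΩ : MeasurableSpace Ω} {F : Filtration ℕ mΩ} {ξ η : ℕ → Ω → ℝ}

lemma measurable_Tproc (hξm : ∀ n, 1 ≤ n → Measurable[F n] (ξ n))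
    (hηm : ∀ n, 1 ≤ n → Measurable[F n] (η n)) (i : ℕ) : Measurable[F i] (Tproc ξ η i) :=
  Finset.measurable_sum _ fun k hk =>
    have ⟨hk₁, hki⟩ := Finset.mem_Icc.1 hk
    (Measurable.ite (measurableSet_eq_fun (hξm k hk₁) (hηm k hk₁))
      measurable_const measurable_const).mono (F.mono hki) le_rfl

lemma measurableSet_alphaProc_eq (hξm : ∀ n, 1 ≤ n → Measurable[F n] (ξ n))
    (hηm : ∀ n, 1 ≤ n → Measurable[F n] (η n)) {n : ℕ} (hn : 1 ≤ n) (i : ℕ) :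
    MeasurableSet[F i] {ω | alphaProc ξ η n ω = i} := by
  cases i with
  | zero => simp [alphaProc_ne_zero]
  | succ i =>
    rw [setOf_alphaProc_eq_add_one ξ η hn i]
    exact (F.mono i.le_succ _ (measurableSet_eq_fun ((measurable_Tproc hξm hηm i).add_const 1)
      measurable_const)).inter
      (measurableSet_eq_fun (hξm _ (by omega)) (hηm _ (by omega)))

lemma measurable_Sproc (hξm : ∀ n, 1 ≤ n → Measurable[F n] (ξ n))
    (hηm : ∀ n, 1 ≤ n → Measurable[F n] (η n)) (i : ℕ) : Measurable[F i] (Sproc ξ η i) :=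
  measurable_const.sub (measurable_Tproc hξm hηm i)

lemma measurableSet_betaProc_eq (hξm : ∀ n, 1 ≤ n → Measurable[F n] (ξ n))
    (hηm : ∀ n, 1 ≤ n → Measurable[F n] (η n)) {n : ℕ} (hn : 1 ≤ n) (i : ℕ) :
    MeasurableSet[F i] {ω | betaProc ξ η n ω = i} := by
  cases i with
  | zero => simp [betaProc_ne_zero]
  | succ i =>
    rw [setOf_betaProc_eq_add_one ξ η hn i]
    exact (F.mono i.le_succ _ (measurableSet_eq_fun ((measurable_Sproc hξm hηm i).add_const 1)
      measurable_const)).inter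
      (measurableSet_eq_fun (hξm _ (by omega)) (hηm _ (by omega))).compl

variable {P : Measure Ω} [IsFiniteMeasure P]

lemma measure_alphaProc_inter_eq_half (hξm : ∀ n, 1 ≤ n → Measurable[F n] (ξ n))
    (hηm : ∀ n, 1 ≤ n → Measurable[F n] (η n)) (hξv : ∀ n ω, ξ n ω = 1 ∨ ξ n ω = -1)
    (hηv : ∀ n ω, η n ω = 1 ∨ η n ω = -1)
    (hfair : ∀ n, 1 ≤ n →
      IsFairSignGiven P (F (n - 1)) (ξ n) ∧ IsFairSignGiven P (F (n - 1)) (η n))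
    {n : ℕ} (hn : 1 ≤ n) (i : ℕ) :
    P ({ω | alphaProc ξ η n ω = i} ∩ {ω | ξ i ω = 1}) = P {ω | alphaProc ξ η n ω = i} * 2⁻¹ ∧
      P ({ω | alphaProc ξ η n ω = i} ∩ {ω | ξ i ω = -1}) =
        P {ω | alphaProc ξ η n ω = i} * 2⁻¹ := by
  cases i with
  | zero => simp [alphaProc_ne_zero]
  | succ i =>
    have hξ : Measurable (ξ (i + 1)) := (hξm _ (by omega)).mono (F.le _) le_rfl
    have hη : Measurable (η (i + 1)) := (hηm _ (by omega)).mono (F.le _) le_rfl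
    obtain ⟨hξf, hηf⟩ := hfair (i + 1) (by omega)
    rw [setOf_alphaProc_eq_add_one ξ η hn i]
    exact measure_inter_eq_half_of_eq P hξ (hξv _)
      (measure_inter_sign_eq_of_isFairSignGiven (F.le i) hξ hη (hξv _) (hηv _) hξf hηf
        (measurableSet_eq_fun ((measurable_Tproc hξm hηm i).add_const 1) measurable_const)).1

lemma measure_betaProc_inter_eq_half (hξm : ∀ n, 1 ≤ n → Measurable[F n] (ξ n))
    (hηm : ∀ n, 1 ≤ n → Measurable[F n] (η n)) (hξv : ∀ n ω, ξ n ω = 1 ∨ ξ n ω = -1)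
    (hηv : ∀ n ω, η n ω = 1 ∨ η n ω = -1)
    (hfair : ∀ n, 1 ≤ n →
      IsFairSignGiven P (F (n - 1)) (ξ n) ∧ IsFairSignGiven P (F (n - 1)) (η n))
    {n : ℕ} (hn : 1 ≤ n) (i : ℕ) :
    P ({ω | betaProc ξ η n ω = i} ∩ {ω | ξ i ω = 1}) = P {ω | betaProc ξ η n ω = i} * 2⁻¹ ∧
      P ({ω | betaProc ξ η n ω = i} ∩ {ω | ξ i ω = -1}) = P {ω | betaProc ξ η n ω = i} * 2⁻¹ := by
  cases i with
  | zero => simp [betaProc_ne_zero]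
  | succ i =>
    have hξ : Measurable (ξ (i + 1)) := (hξm _ (by omega)).mono (F.le _) le_rfl
    have hη : Measurable (η (i + 1)) := (hηm _ (by omega)).mono (F.le _) le_rfl
    obtain ⟨hξf, hηf⟩ := hfair (i + 1) (by omega)
    rw [setOf_betaProc_eq_add_one ξ η hn i]
    exact measure_inter_eq_half_of_eq P hξ (hξv _)
      (measure_inter_sign_eq_of_isFairSignGiven (F.le i) hξ hη (hξv _) (hηv _) hξf hηf
        (measurableSet_eq_fun ((measurable_Sproc hξm hηm i).add_const 1) measurable_const)).2

end SignWalks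

theorem stmt_5_general
    {Ω : Type*} [mΩ : MeasurableSpace Ω] (P : Measure Ω) [IsProbabilityMeasure P]
    (F : MeasureTheory.Filtration ℕ mΩ)
    (ξ η : ℕ → Ω → ℝ)
    (hξm : ∀ n, 1 ≤ n → Measurable[F n] (ξ n))
    (hηm : ∀ n, 1 ≤ n → Measurable[F n] (η n))
    (hξv : ∀ n ω, ξ n ω = 1 ∨ ξ n ω = -1)
    (hηv : ∀ n ω, η n ω = 1 ∨ η n ω = -1)
    (hhalf : ∀ n, 1 ≤ n →
      (P[({ω | ξ n ω = 1}).indicator (fun _ => (1 : ℝ)) | F (n - 1)] =ᵐ[P] fun _ => 1 / 2) ∧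
      (P[({ω | ξ n ω = -1}).indicator (fun _ => (1 : ℝ)) | F (n - 1)] =ᵐ[P] fun _ => 1 / 2) ∧
      (P[({ω | η n ω = 1}).indicator (fun _ => (1 : ℝ)) | F (n - 1)] =ᵐ[P] fun _ => 1 / 2) ∧
      (P[({ω | η n ω = -1}).indicator (fun _ => (1 : ℝ)) | F (n - 1)] =ᵐ[P] fun _ => 1 / 2))
    (ζ ψ : ℕ → Ω → ℝ)
    (hζd : ∀ n, P {ω | ζ n ω = 1} = 2⁻¹ ∧ P {ω | ζ n ω = -1} = 2⁻¹)
    (hψd : ∀ n, P {ω | ψ n ω = 1} = 2⁻¹ ∧ P {ω | ψ n ω = -1} = 2⁻¹)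
    (hindep : iIndep (fun i : ℕ ⊕ ℕ ⊕ Unit =>
      Sum.elim (fun n => MeasurableSpace.comap (ζ n) inferInstance)
        (Sum.elim (fun n => MeasurableSpace.comap (ψ n) inferInstance)
          (fun _ => ⨆ n, (F n : MeasurableSpace Ω))) i) P) :
    ∀ n m : ℕ, 1 ≤ n → 1 ≤ m →
      P {ω | xiAlpha ξ η ζ n ω = 1} = 2⁻¹ ∧
      P {ω | xiAlpha ξ η ζ n ω = -1} = 2⁻¹ ∧
      P {ω | xiBeta ξ η ψ m ω = 1} = 2⁻¹ ∧
      P {ω | xiBeta ξ η ψ m ω = -1} = 2⁻¹ := by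
  intro n m hn hm
  have hfair (k : ℕ) (hk : 1 ≤ k) :
      IsFairSignGiven P (F (k - 1)) (ξ k) ∧ IsFairSignGiven P (F (k - 1)) (η k) :=
    let ⟨h₁, h₂, h₃, h₄⟩ := hhalf k hk
    ⟨⟨h₁, h₂⟩, ⟨h₃, h₄⟩⟩
  have hζ : Indep (⨆ k, F k) (MeasurableSpace.comap (ζ n) inferInstance) P :=
    hindep.indep (i := .inr (.inr ())) (j := .inl n) (by simp)
  have hψ : Indep (⨆ k, F k) (MeasurableSpace.comap (ψ m) inferInstance) P :=
    hindep.indep (i := .inr (.inr ())) (j := .inr (.inl m)) (by simp)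
  have hα := measurableSet_alphaProc_eq hξm hηm hn
  have hβ := measurableSet_betaProc_eq hξm hηm hm
  have hαξ := measure_alphaProc_inter_eq_half hξm hηm hξv hηv hfair hn
  have hβξ := measure_betaProc_inter_eq_half hξm hηm hξv hηv hfair hm
  -- `xiAlpha ξ η ζ n` unfolds to `stoppedValueOr ξ (alphaProc ξ η n) (ζ n)`; likewise `xiBeta`
  exact ⟨measure_stoppedValueOr_eq hα hζ (hζd n).1 fun i => (hαξ i).1,
    measure_stoppedValueOr_eq hα hζ (hζd n).2 fun i => (hαξ i).2,
    measure_stoppedValueOr_eq hβ hψ (hψd m).1 fun i => (hβξ i).1,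
    measure_stoppedValueOr_eq hβ hψ (hψd m).2 fun i => (hβξ i).2⟩

theorem stmt_5
    {Ω : Type*} [mΩ : MeasurableSpace Ω] (P : Measure Ω) [IsProbabilityMeasure P]
    (F : MeasureTheory.Filtration ℕ mΩ) (hF0 : F 0 = ⊥)
    (ξ η : ℕ → Ω → ℝ)
    (hξm : ∀ n, 1 ≤ n → Measurable[F n] (ξ n))
    (hηm : ∀ n, 1 ≤ n → Measurable[F n] (η n))
    (hξv : ∀ n ω, ξ n ω = 1 ∨ ξ n ω = -1)
    (hηv : ∀ n ω, η n ω = 1 ∨ η n ω = -1)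
    (hhalf : ∀ n, 1 ≤ n →
      (P[({ω | ξ n ω = 1}).indicator (fun _ => (1 : ℝ)) | F (n - 1)] =ᵐ[P] fun _ => 1 / 2) ∧
      (P[({ω | ξ n ω = -1}).indicator (fun _ => (1 : ℝ)) | F (n - 1)] =ᵐ[P] fun _ => 1 / 2) ∧
      (P[({ω | η n ω = 1}).indicator (fun _ => (1 : ℝ)) | F (n - 1)] =ᵐ[P] fun _ => 1 / 2) ∧
      (P[({ω | η n ω = -1}).indicator (fun _ => (1 : ℝ)) | F (n - 1)] =ᵐ[P] fun _ => 1 / 2))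
    (ζ ψ : ℕ → Ω → ℝ)
    (hζm : ∀ n, Measurable (ζ n)) (hψm : ∀ n, Measurable (ψ n))
    (hζd : ∀ n, P {ω | ζ n ω = 1} = 2⁻¹ ∧ P {ω | ζ n ω = -1} = 2⁻¹)
    (hψd : ∀ n, P {ω | ψ n ω = 1} = 2⁻¹ ∧ P {ω | ψ n ω = -1} = 2⁻¹)
    (hindep : iIndep (fun i : ℕ ⊕ ℕ ⊕ Unit =>
      Sum.elim (fun n => MeasurableSpace.comap (ζ n) inferInstance)
        (Sum.elim (fun n => MeasurableSpace.comap (ψ n) inferInstance)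
          (fun _ => ⨆ n, (F n : MeasurableSpace Ω))) i) P) :
    ∀ n m : ℕ, 1 ≤ n → 1 ≤ m →
      P {ω | xiAlpha ξ η ζ n ω = 1} = 2⁻¹ ∧
      P {ω | xiAlpha ξ η ζ n ω = -1} = 2⁻¹ ∧
      P {ω | xiBeta ξ η ψ m ω = 1} = 2⁻¹ ∧
      P {ω | xiBeta ξ η ψ m ω = -1} = 2⁻¹ :=
  stmt_5_general (mΩ := mΩ) P F ξ η hξm hηm hξv hηv hhalf ζ ψ hζd hψd hindep
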